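/- arXiv:2402.05626 — 4 statements merged into one kernel-verified Lean document; each statement's English description precedes it below -/
import Mathlib

section
/- Let f : ℝ² → ℝ be defined by f(x,y) = y² + x if x > 0 and y > 0; f(x,y) = −y² + x if x > 0 and y ≤ 0; f(x,y) = y² − x if x ≤ 0 and y > 0; f(x,y) = −y² − x if x ≤ 0 and y ≤ 0. Then for every unit direction d ∈ ℝ², the one-sided directional derivative of f at the origin, lim_{α → 0⁺} (f(α d) − f(0))/α, exists and is nonnegative; hence the origin is a directional stationary point. Moreover, the origin is neither a local minimum nor a local maximum of f. -/
open Filter Topology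

/-- The piecewise function from the paper's non-differentiable saddle example. -/
noncomputable def saddleFun : ℝ × ℝ → ℝ := fun p =>
  if 0 < p.1 then
    (if 0 < p.2 then p.2 ^ 2 + p.1 else -p.2 ^ 2 + p.1)
  else
    (if 0 < p.2 then p.2 ^ 2 - p.1 else -p.2 ^ 2 - p.1)

/-- Every one-sided directional derivative of `saddleFun` at the origin exists and is
nonnegative (directional stationarity), yet the origin is neither a local minimum nor
a local maximum: it is a (non-differentiable) saddle point. -/
theorem saddleFun_origin_is_saddle :
    (∀ d : ℝ × ℝ, d.1 ^ 2 + d.2 ^ 2 = 1 →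
      ∃ L : ℝ, Filter.Tendsto (fun α : ℝ => (saddleFun (α • d) - saddleFun 0) / α)
        (𝓝[>] (0 : ℝ)) (𝓝 L) ∧ 0 ≤ L) ∧
    ¬ IsLocalMin saddleFun 0 ∧ ¬ IsLocalMax saddleFun 0 := by
  have h0 : saddleFun 0 = 0 := by simp [saddleFun]
  refine ⟨?_, ?_, ?_⟩
  · intro d hd
    refine ⟨|d.1|, ?_, abs_nonneg _⟩
    have hg : Filter.Tendsto
        (fun α : ℝ => (if 0 < d.2 then α * d.2 ^ 2 else -(α * d.2 ^ 2)) + |d.1|)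
        (𝓝[>] (0 : ℝ)) (𝓝 |d.1|) := by
      apply tendsto_nhdsWithin_of_tendsto_nhds
      have hc : Continuous (fun α : ℝ =>
          (if 0 < d.2 then α * d.2 ^ 2 else -(α * d.2 ^ 2)) + |d.1|) := by
        by_cases h : 0 < d.2 <;> simp only [h, if_true, if_false] <;> continuity
      simpa using hc.tendsto 0
    refine hg.congr' ?_
    filter_upwards [self_mem_nhdsWithin] with α (hα : (0:ℝ) < α)
    have h1 : (0 < α * d.1) ↔ 0 < d.1 := by
      constructor
      · intro h; nlinarith
      · intro h; positivity
    have h2 : (0 < α * d.2) ↔ 0 < d.2 := by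
      constructor
      · intro h; nlinarith
      · intro h; positivity
    have hαne : α ≠ 0 := ne_of_gt hα
    rw [h0]
    rcases lt_or_ge 0 d.1 with hd1 | hd1 <;> rcases lt_or_ge 0 d.2 with hd2 | hd2 <;>
      simp only [saddleFun, sub_zero, Prod.smul_fst, Prod.smul_snd, smul_eq_mul, h1, h2]
    · rw [if_pos hd2, if_pos hd1, if_pos hd2, abs_of_pos hd1]; field_simp
    · rw [if_neg (not_lt.mpr hd2), if_pos hd1, if_neg (not_lt.mpr hd2),
        abs_of_pos hd1]; field_simp
    · rw [if_pos hd2, if_neg (not_lt.mpr hd1), if_pos hd2, abs_of_nonpos hd1]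
      field_simp; ring
    · rw [if_neg (not_lt.mpr hd2), if_neg (not_lt.mpr hd1), if_neg (not_lt.mpr hd2),
        abs_of_nonpos hd1]; field_simp; ring
  · intro h
    rw [IsLocalMin, IsMinFilter, Metric.eventually_nhds_iff] at h
    obtain ⟨ε, hε, h⟩ := h
    have hdist : dist ((0:ℝ), -(ε/2)) (0 : ℝ × ℝ) < ε := by
      rw [Prod.dist_eq, max_lt_iff]
      constructor
      · simp [Real.dist_eq]; linarith
      · simp only [Prod.snd_zero, Real.dist_eq, sub_zero]
        rw [abs_lt]; constructor <;> linarith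
    have := h hdist
    rw [h0] at this
    simp only [saddleFun] at this
    norm_num at this
    rw [if_neg (by linarith : ¬ ε/2 < 0)] at this
    nlinarith
  · intro h
    rw [IsLocalMax, IsMaxFilter, Metric.eventually_nhds_iff] at h
    obtain ⟨ε, hε, h⟩ := h
    have hdist : dist ((ε/2, 0) : ℝ × ℝ) (0 : ℝ × ℝ) < ε := by
      rw [Prod.dist_eq, max_lt_iff]
      constructor
      · simp only [Prod.fst_zero, Real.dist_eq, sub_zero]
        rw [abs_lt]; constructor <;> linarith
      · simp [Real.dist_eq]; linarith
    have := h hdist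
    rw [h0] at this
    simp only [saddleFun] at this
    rw [if_pos (by linarith : (0:ℝ) < ε/2)] at this
    norm_num at this
    linarith
end

section
/- Consider a one-hidden-layer network with scalar output ŷ(x) = Σ_i h_i ρ(wᵢ·x) with ReLU-like activation ρ, trained by the empirical squared loss L, and consider gradient flow dP/dt = −∂L/∂P (with the convention ∂ρ(z)/∂z = α⁺ 1_{z>0} + α⁻ 1_{z<0}, and ∂ρ/∂z = α⁺ at z = 0, say). Then for each hidden neuron i, the quantity ‖wᵢ(t)‖² − hᵢ(t)² is constant along the gradient flow trajectory. -/
open Matrix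

/-!
Write the gradient flow as `wᵢ' = -hᵢ gᵢ` and `hᵢ' = -cᵢ`, with `gᵢ = ∑ₖ eₖ ρ'(wᵢ · xₖ) xₖ` and
`cᵢ = ∑ₖ eₖ ρ(wᵢ · xₖ)`. The identity `ρ z = ρ' z · z` (Euler's relation for the positively
homogeneous activation, valid also at `z = 0`) gives `wᵢ · gᵢ = cᵢ`.
Hence `d/dt (‖wᵢ‖² - hᵢ²) = 2 (wᵢ · wᵢ' - hᵢ hᵢ') = 2 (-hᵢ cᵢ + hᵢ cᵢ) = 0`.
-/

lemma leakyRelu_eq_deriv_mul_self {αp αm : ℝ} {ρ ρ' : ℝ → ℝ}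
    (hρ : ∀ z, ρ z = if 0 ≤ z then αp * z else αm * z)
    (hρ' : ∀ z, ρ' z = if 0 ≤ z then αp else αm) (z : ℝ) :
    ρ z = ρ' z * z := by
  rw [hρ, hρ']
  split <;> ring

lemma dotProduct_sum_smul_eq_of_euler {ι K : Type*} [Fintype ι] [Fintype K] {ρ ρ' : ℝ → ℝ}
    (hρ : ∀ z, ρ z = ρ' z * z) (w : ι → ℝ) (x : K → ι → ℝ) (c : K → ℝ) :
    w ⬝ᵥ ∑ k, (c k * ρ' (w ⬝ᵥ x k)) • x k = ∑ k, c k * ρ (w ⬝ᵥ x k) := by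
  simp only [dotProduct_sum, dotProduct_smul, smul_eq_mul, hρ]
  exact Finset.sum_congr rfl fun k _ => by ring

lemma HasDerivAt.sum_sq_sub_sq {ι : Type*} [Fintype ι] {w : ℝ → ι → ℝ} {h : ℝ → ℝ}
    {w' : ι → ℝ} {h' t : ℝ} (hw : HasDerivAt w w' t) (hh : HasDerivAt h h' t) :
    HasDerivAt (fun s => (∑ m, w s m ^ 2) - h s ^ 2) (2 * (w t ⬝ᵥ w' - h t * h')) t := by
  have hsum : HasDerivAt (fun s => ∑ m, w s m ^ 2) (∑ m, 2 * w t m * w' m) t :=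
    HasDerivAt.fun_sum fun m _ => by simpa using (hasDerivAt_pi.mp hw m).fun_pow 2
  refine (hsum.fun_sub (by simpa using hh.fun_pow 2)).congr_deriv ?_
  simp only [dotProduct, mul_sub, Finset.mul_sum, mul_assoc]

lemma sum_sq_sub_sq_eq_of_hasDerivAt {ι : Type*} [Fintype ι] {w v : ℝ → ι → ℝ} {h c : ℝ → ℝ}
    (hw : ∀ t, HasDerivAt w (-(h t • v t)) t) (hh : ∀ t, HasDerivAt h (-c t) t)
    (hvc : ∀ t, w t ⬝ᵥ v t = c t) (t₀ t : ℝ) :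
    (∑ m, w t m ^ 2) - h t ^ 2 = (∑ m, w t₀ m ^ 2) - h t₀ ^ 2 := by
  have hderiv : ∀ s, HasDerivAt (fun s => (∑ m, w s m ^ 2) - h s ^ 2) 0 s := by
    intro s
    convert (hw s).sum_sq_sub_sq (hh s) using 1
    rw [dotProduct_neg, dotProduct_smul, smul_eq_mul, hvc]
    ring
  exact is_const_of_deriv_eq_zero (fun s => (hderiv s).differentiableAt)
    (fun s => (hderiv s).deriv) t t₀

theorem balancedness_conserved_general (αp αm : ℝ) (d : ℕ) {I K : Type*} [Fintype K]
    (x : K → Fin d → ℝ)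
    (ρ ρ' : ℝ → ℝ)
    (hρ : ∀ z, ρ z = if 0 ≤ z then αp * z else αm * z)
    (hρ' : ∀ z, ρ' z = if 0 ≤ z then αp else αm)
    (w : ℝ → I → Fin d → ℝ) (h : ℝ → I → ℝ) (e : ℝ → K → ℝ)
    (hw : ∀ t i, HasDerivAt (fun s => w s i)
      (-(h t i • ∑ k, (e t k * ρ' (w t i ⬝ᵥ x k)) • x k)) t)
    (hh : ∀ t i, HasDerivAt (fun s => h s i)
      (-(∑ k, e t k * ρ (w t i ⬝ᵥ x k))) t) :
    ∀ i t, (∑ m, (w t i m) ^ 2) - (h t i) ^ 2 = (∑ m, (w 0 i m) ^ 2) - (h 0 i) ^ 2 :=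
  fun i t => sum_sq_sub_sq_eq_of_hasDerivAt (fun t => hw t i) (fun t => hh t i)
    (fun _ => dotProduct_sum_smul_eq_of_euler (leakyRelu_eq_deriv_mul_self hρ hρ') _ _ _) 0 t

/-- Along gradient flow of the empirical squared loss of a one-hidden-layer
scalar-output ReLU-like network (with the convention `ρ'(0) = α⁺`), the quantity
`‖wᵢ‖² − hᵢ²` is conserved for each hidden neuron `i`. -/
theorem balancedness_conserved (αp αm : ℝ) (d : ℕ) {I K : Type*} [Fintype I] [Fintype K]
    (x : K → Fin d → ℝ) (y : K → ℝ)
    (ρ ρ' : ℝ → ℝ)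
    (hρ : ∀ z, ρ z = if 0 ≤ z then αp * z else αm * z)
    (hρ' : ∀ z, ρ' z = if 0 ≤ z then αp else αm)
    (w : ℝ → I → Fin d → ℝ) (h : ℝ → I → ℝ) (e : ℝ → K → ℝ)
    (he : ∀ t k, e t k = (∑ i, h t i * ρ (w t i ⬝ᵥ x k)) - y k)
    (hw : ∀ t i, HasDerivAt (fun s => w s i)
      (-(h t i • ∑ k, (e t k * ρ' (w t i ⬝ᵥ x k)) • x k)) t)
    (hh : ∀ t i, HasDerivAt (fun s => h s i)
      (-(∑ k, e t k * ρ (w t i ⬝ᵥ x k))) t) :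
    ∀ i t, (∑ m, (w t i m) ^ 2) - (h t i) ^ 2 = (∑ m, (w 0 i m) ^ 2) - (h 0 i) ^ 2 :=
  balancedness_conserved_general αp αm d x ρ ρ' hρ hρ' w h e hw hh
end

section
/- Suppose P̄ is a directional stationary point of the empirical squared loss L of a one-hidden-layer scalar-output ReLU-like network, and suppose hidden neuron i is an escape neuron: there exists a tangential direction v of w̄ᵢ with h̄ᵢ·(dᵢᵛ·v) = 0 and dᵢᵛ·v ≠ 0 (which forces h̄ᵢ = 0). Then there exist a unit vector ℓ in parameter space and a constant C < 0 such that L(P̄ + δℓ) − L(P̄) = C δ² + o(δ²) as δ → 0⁺; in particular P̄ is not a local minimum. -/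
/-!
Since `dᵢᵛ·v ≠ 0`, the escape condition forces `h̄ᵢ = 0`: neuron `i` is dead. Perturbing
`(hᵢ, wᵢ)` by `δ (h, v)` therefore changes the output at `x_k` by `δ h ρ(cₖ + δ tₖ)`, where
`cₖ = w̄ᵢ·x_k` and `tₖ = v·x_k`, and for small `δ > 0` this is `δ h (ρ(cₖ) + δ σₖ tₖ)` with a
fixed one-sided slope `σₖ`. Stationarity in the `hᵢ`-direction gives `∑ eₖ ρ(cₖ) = 0`, which
kills the first-order term, so the loss changes by `δ² (h τ + h²/2 ∑ ρ(cₖ)² + O(δ))` with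
`τ = dᵢᵛ·v = ∑ eₖ σₖ tₖ`. A small `h` of sign opposite to `τ` makes the coefficient negative.
-/

open Filter Topology

/-- The factor multiplying `e k • x k` in `dᵢᵛ`. -/
noncomputable def leakySlope (αp αm z : ℝ) : ℝ :=
  if 0 < z then αp else if z < 0 then αm else 0

section LeakyReLU

variable {αp αm : ℝ}

theorem leakySlope_mul_of_pos {s : ℝ} (hs : 0 < s) (t : ℝ) :
    leakySlope αp αm (s * t) = leakySlope αp αm t := by
  rcases lt_trichotomy t 0 with ht | rfl | ht
  · simp [leakySlope, ht, mul_neg_of_pos_of_neg hs ht, (mul_neg_of_pos_of_neg hs ht).not_gt,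
      ht.not_gt]
  · simp [leakySlope]
  · simp [leakySlope, ht, mul_pos hs ht]

theorem leakySlope_eventually_eq {c : ℝ} (hc : c ≠ 0) :
    ∀ᶠ z in 𝓝 c, leakySlope αp αm z = leakySlope αp αm c := by
  rcases hc.lt_or_gt with hc | hc
  · filter_upwards [eventually_lt_nhds hc] with z hz
    simp [leakySlope, hz, hc, hz.not_gt, hc.not_gt]
  · filter_upwards [eventually_gt_nhds hc] with z hz
    simp [leakySlope, hz, hc]

variable {ρ : ℝ → ℝ}

theorem eq_leakySlope_mul (hρ : ∀ z, ρ z = if 0 ≤ z then αp * z else αm * z) (z : ℝ) :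
    ρ z = leakySlope αp αm z * z := by
  rcases lt_trichotomy z 0 with hz | rfl | hz
  · simp [hρ, leakySlope, hz, hz.not_ge, hz.not_gt]
  · simp [hρ]
  · simp [hρ, leakySlope, hz, hz.le]

/-- The one-sided slope `σ` is that of `c` if `c ≠ 0`, and that of `t` if `c = 0`. -/
theorem exists_eventually_leakySlope_add_mul
    (hρ : ∀ z, ρ z = if 0 ≤ z then αp * z else αm * z) (c t : ℝ) :
    ∃ σ, ∀ᶠ s in 𝓝[>] 0,
      leakySlope αp αm (c + s * t) = σ ∧ ρ (c + s * t) = ρ c + s * (σ * t) := by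
  by_cases hc : c = 0
  · subst hc
    refine ⟨leakySlope αp αm t, ?_⟩
    filter_upwards [self_mem_nhdsWithin] with s (hs : 0 < s)
    rw [zero_add, leakySlope_mul_of_pos hs, eq_leakySlope_mul hρ, eq_leakySlope_mul hρ 0,
      leakySlope_mul_of_pos hs]
    exact ⟨rfl, by ring⟩
  · refine ⟨leakySlope αp αm c, ?_⟩
    have hline : Tendsto (fun s : ℝ => c + s * t) (𝓝[>] 0) (𝓝 c) :=
      ((by fun_prop : Continuous fun s : ℝ => c + s * t).tendsto' 0 c (by simp)).mono_left
        nhdsWithin_le_nhds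
    filter_upwards [hline.eventually (leakySlope_eventually_eq hc)] with s hs
    refine ⟨hs, ?_⟩
    rw [eq_leakySlope_mul hρ, eq_leakySlope_mul hρ c, hs]
    ring

end LeakyReLU

theorem nonneg_of_sub_eq_mul_add_sq {V : Type*} [AddCommGroup V] [Module ℝ V] {L : V → ℝ}
    {P Δ : V} {A : ℝ} (B : ℝ)
    (hstat : ∀ c : ℝ, Tendsto (fun α : ℝ => (L (P + α • Δ) - L P) / α) (𝓝[>] 0) (𝓝 c) → 0 ≤ c)
    (hL : ∀ α : ℝ, L (P + α • Δ) - L P = α * A + α ^ 2 * B) : 0 ≤ A := by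
  apply hstat
  have hlin : Tendsto (fun α : ℝ => A + α * B) (𝓝[>] 0) (𝓝 A) :=
    ((by fun_prop : Continuous fun α : ℝ => A + α * B).tendsto' 0 A (by simp)).mono_left
      nhdsWithin_le_nhds
  refine hlin.congr' ?_
  filter_upwards [self_mem_nhdsWithin] with α (hα : 0 < α)
  rw [hL]
  field_simp

theorem isLittleO_sub_mul_sq_of_eventually_eq_sq_mul {l : Filter ℝ} {f F : ℝ → ℝ} {C : ℝ}
    (hF : Tendsto F l (𝓝 C)) (hf : ∀ᶠ δ in l, f δ = δ ^ 2 * F δ) :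
    (fun δ => f δ - C * δ ^ 2) =o[l] fun δ => δ ^ 2 := by
  have hsmall : (fun δ => δ ^ 2 * (F δ - C)) =o[l] fun δ => δ ^ 2 * (1 : ℝ) :=
    (Asymptotics.isBigO_refl _ l).mul_isLittleO
      ((Asymptotics.isLittleO_one_iff ℝ).2 (by simpa using hF.sub_const C))
  refine hsmall.congr' ?_ (by simp)
  filter_upwards [hf] with δ hδ
  rw [hδ]
  ring

theorem eventually_neg_of_eventually_eq_sq_mul {f F : ℝ → ℝ} {C : ℝ}
    (hF : Tendsto F (𝓝[>] 0) (𝓝 C)) (hC : C < 0) (hf : ∀ᶠ δ in 𝓝[>] 0, f δ = δ ^ 2 * F δ) :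
    ∀ᶠ δ in 𝓝[>] 0, f δ < 0 := by
  filter_upwards [hf, hF.eventually_lt_const hC, self_mem_nhdsWithin] with δ hδ hFδ (hpos : 0 < δ)
  rw [hδ]
  exact mul_neg_of_pos_of_neg (by positivity) hFδ

theorem not_isLocalMin_of_eventually_lt {V : Type*} [TopologicalSpace V] [AddCommGroup V]
    [Module ℝ V] [ContinuousAdd V] [ContinuousSMul ℝ V] {L : V → ℝ} {P ℓ : V}
    (h : ∀ᶠ δ in 𝓝[>] (0 : ℝ), L (P + δ • ℓ) < L P) : ¬ IsLocalMin L P := by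
  intro hmin
  have hline : Tendsto (fun δ : ℝ => P + δ • ℓ) (𝓝[>] 0) (𝓝 P) :=
    ((by fun_prop : Continuous fun δ : ℝ => P + δ • ℓ).tendsto' 0 P (by simp)).mono_left
      nhdsWithin_le_nhds
  obtain ⟨δ, hge, hlt⟩ := ((hline.eventually hmin).and h).exists
  exact hge.not_gt hlt

/-- The witness `-τ / (|τ| + M)` is the paper's `Δhᵢ = -sgn(τ) a` with `a = |τ| / (|τ| + M)`. -/
theorem exists_abs_le_one_mul_add_sq_mul_neg {τ M : ℝ} (hτ : τ ≠ 0) (hM : 0 ≤ M) :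
    ∃ h : ℝ, |h| ≤ 1 ∧ h * τ + h ^ 2 / 2 * M < 0 := by
  have hτ' : 0 < |τ| := abs_pos.2 hτ
  have hD : 0 < |τ| + M := by positivity
  refine ⟨-τ / (|τ| + M), ?_, ?_⟩
  · rw [abs_div, abs_neg, abs_of_pos hD, div_le_one hD]
    linarith
  · field_simp
    nlinarith [sq_abs τ, mul_pos hτ' hτ', mul_nonneg hτ'.le hM]

section Network

variable {E I K : Type*} [NormedAddCommGroup E] [InnerProductSpace ℝ E] [Fintype I] [Fintype K]

def netOutput (ρ : ℝ → ℝ) (P : (I → ℝ) × (I → E)) (z : E) : ℝ :=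
  ∑ i, P.1 i * ρ (inner ℝ (P.2 i) z)

noncomputable def sqLoss (ρ : ℝ → ℝ) (x : K → E) (y : K → ℝ) (P : (I → ℝ) × (I → E)) : ℝ :=
  (1 / 2) * ∑ k, (netOutput ρ P (x k) - y k) ^ 2

variable [DecidableEq I] (ρ : ℝ → ℝ)

theorem netOutput_add_smul_single (P : (I → ℝ) × (I → E)) (i : I) (h : ℝ) (w : E) (α : ℝ)
    (z : E) :
    netOutput ρ (P + α • (Pi.single i h, Pi.single i w)) z = netOutput ρ P z +
      ((P.1 i + α * h) * ρ (inner ℝ (P.2 i + α • w) z) - P.1 i * ρ (inner ℝ (P.2 i) z)) := by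
  have hterm : ∀ j, (P + α • (Pi.single i h, Pi.single i w)).1 j
        * ρ (inner ℝ ((P + α • (Pi.single i h, Pi.single i w)).2 j) z)
      = P.1 j * ρ (inner ℝ (P.2 j) z) + (Pi.single i
        ((P.1 i + α * h) * ρ (inner ℝ (P.2 i + α • w) z) - P.1 i * ρ (inner ℝ (P.2 i) z)) :
          I → ℝ) j := by
    intro j
    rcases eq_or_ne j i with rfl | hj
    · simp
    · simp [hj]
  simp only [netOutput, hterm, Finset.sum_add_distrib, Finset.sum_pi_single', Finset.mem_univ,
    if_true]

variable (x : K → E) (y : K → ℝ) (P : (I → ℝ) × (I → E)) (i : I)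

theorem sqLoss_add_smul_single_sub (hi : P.1 i = 0) (h : ℝ) (w : E) (α : ℝ) :
    sqLoss ρ x y (P + α • (Pi.single i h, Pi.single i w)) - sqLoss ρ x y P =
      ∑ k, ((netOutput ρ P (x k) - y k) * (α * h * ρ (inner ℝ (P.2 i + α • w) (x k)))
        + (α * h * ρ (inner ℝ (P.2 i + α • w) (x k))) ^ 2 / 2) := by
  simp only [sqLoss, netOutput_add_smul_single, hi]
  rw [← mul_sub, ← Finset.sum_sub_distrib, Finset.mul_sum]
  exact Finset.sum_congr rfl fun k _ => by ring

theorem sum_residual_mul_eq_zero_of_stationary (hi : P.1 i = 0)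
    (hstat : ∀ Δ : (I → ℝ) × (I → E), ∀ c : ℝ,
      Tendsto (fun α : ℝ => (sqLoss ρ x y (P + α • Δ) - sqLoss ρ x y P) / α) (𝓝[>] 0) (𝓝 c) →
      0 ≤ c) :
    ∑ k, (netOutput ρ P (x k) - y k) * ρ (inner ℝ (P.2 i) (x k)) = 0 := by
  have key : ∀ h : ℝ, 0 ≤ h * ∑ k, (netOutput ρ P (x k) - y k) * ρ (inner ℝ (P.2 i) (x k)) :=
    fun h => nonneg_of_sub_eq_mul_add_sq (hstat (Pi.single i h, Pi.single i 0))
      (B := h ^ 2 / 2 * ∑ k, ρ (inner ℝ (P.2 i) (x k)) ^ 2) fun α => by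
        rw [sqLoss_add_smul_single_sub ρ x y P i hi, Finset.mul_sum, Finset.mul_sum,
          Finset.mul_sum, Finset.mul_sum, ← Finset.sum_add_distrib]
        refine Finset.sum_congr rfl fun k _ => ?_
        rw [smul_zero, add_zero]
        ring
  linarith [key 1, key (-1)]

theorem exists_sqLoss_add_smul_single_sub_eq_sq_mul (hi : P.1 i = 0)
    (hcrit : ∑ k, (netOutput ρ P (x k) - y k) * ρ (inner ℝ (P.2 i) (x k)) = 0)
    (v : E) (σ : K → ℝ)
    (hσ : ∀ᶠ s in 𝓝[>] 0, ∀ k, ρ (inner ℝ (P.2 i) (x k) + s * inner ℝ v (x k)) =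
      ρ (inner ℝ (P.2 i) (x k)) + s * (σ k * inner ℝ v (x k)))
    (h : ℝ) :
    ∃ F : ℝ → ℝ, Tendsto F (𝓝[>] 0) (𝓝 (h * ∑ k, (netOutput ρ P (x k) - y k) *
        (σ k * inner ℝ v (x k)) + h ^ 2 / 2 * ∑ k, ρ (inner ℝ (P.2 i) (x k)) ^ 2)) ∧
      ∀ᶠ δ in 𝓝[>] 0,
        sqLoss ρ x y (P + δ • (Pi.single i h, Pi.single i v)) - sqLoss ρ x y P = δ ^ 2 * F δ := by
  set e := fun k => netOutput ρ P (x k) - y k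
  set R := fun k => ρ (inner ℝ (P.2 i) (x k))
  set S := fun k => σ k * inner ℝ v (x k)
  refine ⟨fun δ => h * ∑ k, e k * S k + h ^ 2 / 2 * ∑ k, (R k + δ * S k) ^ 2, ?_, ?_⟩
  · exact ((by fun_prop : Continuous fun δ : ℝ => h * ∑ k, e k * S k +
      h ^ 2 / 2 * ∑ k, (R k + δ * S k) ^ 2).tendsto' 0 _ (by simp [e, R, S])).mono_left
      nhdsWithin_le_nhds
  filter_upwards [hσ] with δ hδ
  simp only [sqLoss_add_smul_single_sub ρ x y P i hi, inner_add_left, real_inner_smul_left, hδ]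
  have hterm : ∀ k, e k * (δ * h * (R k + δ * S k)) + (δ * h * (R k + δ * S k)) ^ 2 / 2 =
      δ * h * (e k * R k) + δ ^ 2 * (h * (e k * S k) + h ^ 2 / 2 * (R k + δ * S k) ^ 2) :=
    fun k => by ring
  rw [Finset.sum_congr rfl fun k _ => hterm k, Finset.sum_add_distrib, ← Finset.mul_sum,
    ← Finset.mul_sum, Finset.sum_add_distrib, ← Finset.mul_sum, ← Finset.mul_sum]
  simp only [e, R, hcrit]
  ring

end Network

theorem escape_neuron_second_order_decrease_general (αp αm : ℝ) (d : ℕ)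
    {I K : Type*} [Fintype I] [Fintype K]
    (ρ : ℝ → ℝ) (hρ : ∀ z, ρ z = if 0 ≤ z then αp * z else αm * z)
    (x : K → EuclideanSpace ℝ (Fin d)) (y : K → ℝ)
    (L : (I → ℝ) × (I → EuclideanSpace ℝ (Fin d)) → ℝ)
    (hL : ∀ P, L P = (1 / 2) * ∑ k,
      ((∑ i, P.1 i * ρ (inner ℝ (P.2 i) (x k) : ℝ)) - y k) ^ 2)
    (Pbar : (I → ℝ) × (I → EuclideanSpace ℝ (Fin d)))
    (hstat : ∀ Δ : (I → ℝ) × (I → EuclideanSpace ℝ (Fin d)), ∀ c : ℝ,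
      Filter.Tendsto (fun α : ℝ => (L (Pbar + α • Δ) - L Pbar) / α) (𝓝[>] (0 : ℝ)) (𝓝 c) →
      0 ≤ c)
    (i : I) (v : EuclideanSpace ℝ (Fin d)) (hv : ‖v‖ = 1)
    (e : K → ℝ)
    (he : ∀ k, e k = (∑ i', Pbar.1 i' * ρ (inner ℝ (Pbar.2 i') (x k) : ℝ)) - y k)
    (dv : EuclideanSpace ℝ (Fin d))
    (hdv : ∃ s₀ > (0 : ℝ), ∀ s ∈ Set.Ioo (0 : ℝ) s₀,
      dv = ∑ k, ((if 0 < (inner ℝ (Pbar.2 i + s • v) (x k) : ℝ) then αp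
        else if (inner ℝ (Pbar.2 i + s • v) (x k) : ℝ) < 0 then αm else 0) * e k) • x k)
    (hesc1 : Pbar.1 i * (inner ℝ dv v : ℝ) = 0)
    (hesc2 : (inner ℝ dv v : ℝ) ≠ 0) :
    ∃ (ℓ : (I → ℝ) × (I → EuclideanSpace ℝ (Fin d))) (C : ℝ), ‖ℓ‖ = 1 ∧ C < 0 ∧
      (fun δ : ℝ => L (Pbar + δ • ℓ) - L Pbar - C * δ ^ 2) =o[𝓝[>] (0 : ℝ)]
        (fun δ : ℝ => δ ^ 2) ∧
      ¬ IsLocalMin L Pbar := by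
  classical
  obtain rfl : L = sqLoss ρ x y := funext hL
  have hi : Pbar.1 i = 0 := (mul_eq_zero.1 hesc1).resolve_right hesc2
  have hcrit := sum_residual_mul_eq_zero_of_stationary ρ x y Pbar i hi hstat
  choose σ hσ using fun k =>
    exists_eventually_leakySlope_add_mul hρ (inner ℝ (Pbar.2 i) (x k)) (inner ℝ v (x k))
  replace hσ := eventually_all.2 hσ
  have hτ : inner ℝ dv v = ∑ k, (netOutput ρ Pbar (x k) - y k) * (σ k * inner ℝ v (x k)) := by
    obtain ⟨s₀, hs₀, hdv⟩ := hdv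
    obtain ⟨s, hs, hs₀'⟩ := (hσ.and (Ioo_mem_nhdsGT hs₀)).exists
    simp only [inner_add_left, real_inner_smul_left] at hdv
    simp only [leakySlope] at hs
    rw [hdv s hs₀', sum_inner]
    refine Finset.sum_congr rfl fun k _ => ?_
    rw [real_inner_smul_left, real_inner_comm v (x k), (hs k).1, he, netOutput]
    ring
  obtain ⟨h, hh, hC⟩ := exists_abs_le_one_mul_add_sq_mul_neg hesc2
    (Finset.sum_nonneg fun k _ => sq_nonneg (ρ (inner ℝ (Pbar.2 i) (x k))))
  obtain ⟨F, hF, hexp⟩ := exists_sqLoss_add_smul_single_sub_eq_sq_mul ρ x y Pbar i hi hcrit v σ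
    (hσ.mono fun s hs k => (hs k).2) h
  rw [← hτ] at hF
  refine ⟨(Pi.single i h, Pi.single i v), _, ?_, hC,
    isLittleO_sub_mul_sq_of_eventually_eq_sq_mul hF hexp,
    not_isLocalMin_of_eventually_lt (ℓ := (Pi.single i h, Pi.single i v)) ?_⟩
  · rw [Prod.norm_def, Pi.norm_single, Pi.norm_single, hv, Real.norm_eq_abs, max_eq_right hh]
  · filter_upwards [eventually_neg_of_eventually_eq_sq_mul hF hC hexp] with δ hδ
    linarith

/-- At a directional stationary point of the empirical squared loss of a scalar-output
one-hidden-layer ReLU-like network, the presence of an escape neuron `i` (a tangential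
direction `v` of `w̄ᵢ` with `h̄ᵢ·(dᵢᵛ·v) = 0` and `dᵢᵛ·v ≠ 0`) yields a unit direction
`ℓ` of second-order loss decrease: `L(Pbar + δℓ) − L(Pbar) = Cδ² + o(δ²)` with `C < 0`;
in particular `Pbar` is not a local minimum. -/
theorem escape_neuron_second_order_decrease (αp αm : ℝ) (d : ℕ)
    {I K : Type*} [Fintype I] [Fintype K]
    (ρ : ℝ → ℝ) (hρ : ∀ z, ρ z = if 0 ≤ z then αp * z else αm * z)
    (x : K → EuclideanSpace ℝ (Fin d)) (y : K → ℝ)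
    (L : (I → ℝ) × (I → EuclideanSpace ℝ (Fin d)) → ℝ)
    (hL : ∀ P, L P = (1 / 2) * ∑ k,
      ((∑ i, P.1 i * ρ (inner ℝ (P.2 i) (x k) : ℝ)) - y k) ^ 2)
    (Pbar : (I → ℝ) × (I → EuclideanSpace ℝ (Fin d)))
    (hstat : ∀ Δ : (I → ℝ) × (I → EuclideanSpace ℝ (Fin d)), ∀ c : ℝ,
      Filter.Tendsto (fun α : ℝ => (L (Pbar + α • Δ) - L Pbar) / α) (𝓝[>] (0 : ℝ)) (𝓝 c) →
      0 ≤ c)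
    (i : I) (v : EuclideanSpace ℝ (Fin d)) (hv : ‖v‖ = 1)
    (hvw : (inner ℝ v (Pbar.2 i) : ℝ) = 0)
    (e : K → ℝ)
    (he : ∀ k, e k = (∑ i', Pbar.1 i' * ρ (inner ℝ (Pbar.2 i') (x k) : ℝ)) - y k)
    (dv : EuclideanSpace ℝ (Fin d))
    (hdv : ∃ s₀ > (0 : ℝ), ∀ s ∈ Set.Ioo (0 : ℝ) s₀,
      dv = ∑ k, ((if 0 < (inner ℝ (Pbar.2 i + s • v) (x k) : ℝ) then αp
        else if (inner ℝ (Pbar.2 i + s • v) (x k) : ℝ) < 0 then αm else 0) * e k) • x k)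
    (hesc1 : Pbar.1 i * (inner ℝ dv v : ℝ) = 0)
    (hesc2 : (inner ℝ dv v : ℝ) ≠ 0) :
    ∃ (ℓ : (I → ℝ) × (I → EuclideanSpace ℝ (Fin d))) (C : ℝ), ‖ℓ‖ = 1 ∧ C < 0 ∧
      (fun δ : ℝ => L (Pbar + δ • ℓ) - L Pbar - C * δ ^ 2) =o[𝓝[>] (0 : ℝ)]
        (fun δ : ℝ => δ ^ 2) ∧
      ¬ IsLocalMin L Pbar :=
  escape_neuron_second_order_decrease_general αp αm d ρ hρ x y L hL Pbar hstat i v hv e he dv hdv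
    hesc1 hesc2
end

section
/- Suppose α⁻ = 0 (ReLU activation) and P̄ is a directional stationary point of the empirical squared loss of a one-hidden-layer ReLU network. Add new hidden neurons i⁻ with arbitrary output weights h_{j i⁻} and input weights satisfying w_{i⁻} · x_k < 0 for every training input x_k (negative units). Then the augmented parameter point is still a directional stationary point: the network outputs on training data are unchanged, and the partial derivatives ∂L/∂h_{j i⁻}, the radial derivative ∂L/∂r_{i⁻}, and all tangential derivatives ∂L/∂s_{i⁻} at the new neurons vanish. -/
open Filter Topology Matrix

/-- Adding negative units (α⁻ = 0, new input weights with `w_{i⁻}·x_k < 0` for all `k`,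
arbitrary output weights) to a directional stationary point of a one-hidden-layer ReLU
network: the network outputs on training data are unchanged, all one-sided derivatives
of the loss in the directions of the new neurons' parameters vanish, and the augmented
point is still a directional stationary point. -/
theorem negative_units_preserve_stationarity (αp : ℝ) (d : ℕ)
    {I I' J K : Type*} [Fintype I] [Fintype I'] [Fintype J] [Fintype K] [DecidableEq I']
    (ρ : ℝ → ℝ) (hρ : ∀ z, ρ z = if 0 ≤ z then αp * z else 0)
    (x : K → Fin d → ℝ) (y : K → J → ℝ)
    (L : (J → I → ℝ) × (I → Fin d → ℝ) → ℝ)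
    (hLdef : ∀ P, L P = (1 / 2) * ∑ k, ∑ j,
      ((∑ i, P.1 j i * ρ (P.2 i ⬝ᵥ x k)) - y k j) ^ 2)
    (L' : (J → (I ⊕ I') → ℝ) × ((I ⊕ I') → Fin d → ℝ) → ℝ)
    (hL'def : ∀ P, L' P = (1 / 2) * ∑ k, ∑ j,
      ((∑ i, P.1 j i * ρ (P.2 i ⬝ᵥ x k)) - y k j) ^ 2)
    (H : J → I → ℝ) (W : I → Fin d → ℝ)
    (hstat : ∀ Δ : (J → I → ℝ) × (I → Fin d → ℝ), ∀ c : ℝ,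
      Filter.Tendsto (fun α : ℝ => (L ((H, W) + α • Δ) - L (H, W)) / α)
        (𝓝[>] (0 : ℝ)) (𝓝 c) → 0 ≤ c)
    (H' : J → I' → ℝ) (W' : I' → Fin d → ℝ)
    (hneg : ∀ i' k, W' i' ⬝ᵥ x k < 0)
    (Haug : J → (I ⊕ I') → ℝ) (hHaug : ∀ j, Haug j = Sum.elim (H j) (H' j))
    (Waug : (I ⊕ I') → Fin d → ℝ) (hWaug : Waug = Sum.elim W W') :
    (∀ k j, (∑ i, Haug j i * ρ (Waug i ⬝ᵥ x k)) = ∑ i, H j i * ρ (W i ⬝ᵥ x k)) ∧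
    (∀ (i' : I') (vh : J → ℝ) (vw : Fin d → ℝ),
      Filter.Tendsto (fun s : ℝ =>
        (L' ((Haug, Waug) +
          s • ((fun j => Sum.elim (fun _ => (0:ℝ)) (fun i'' => if i'' = i' then vh j else 0)),
            Sum.elim (fun _ => (0 : Fin d → ℝ)) (fun i'' => if i'' = i' then vw else 0))) - L' (Haug, Waug)) / s)
        (𝓝[>] (0 : ℝ)) (𝓝 0)) ∧
    (∀ Δ : (J → (I ⊕ I') → ℝ) × ((I ⊕ I') → Fin d → ℝ), ∀ c : ℝ,
      Filter.Tendsto (fun α : ℝ => (L' ((Haug, Waug) + α • Δ) - L' (Haug, Waug)) / α)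
        (𝓝[>] (0 : ℝ)) (𝓝 c) → 0 ≤ c) := by
  have hρneg : ∀ z : ℝ, z < 0 → ρ z = 0 := fun z hz => by
    rw [hρ]; exact if_neg (not_le.mpr hz)
  have hout : ∀ k j, (∑ i, Haug j i * ρ (Waug i ⬝ᵥ x k)) = ∑ i, H j i * ρ (W i ⬝ᵥ x k) := by
    intro k j
    rw [Fintype.sum_sum_type]
    simp [hHaug, hWaug, fun i' => hρneg _ (hneg i' k)]
  have hLL : L' (Haug, Waug) = L (H, W) := by
    rw [hL'def, hLdef]
    simp only [hout]
  have key : ∀ Δ : (J → (I ⊕ I') → ℝ) × ((I ⊕ I') → Fin d → ℝ),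
      ∀ᶠ α in 𝓝[>] (0:ℝ),
        L' ((Haug, Waug) + α • Δ) =
        L ((H, W) + α • ((fun j i => Δ.1 j (Sum.inl i)), fun i => Δ.2 (Sum.inl i))) := by
    intro Δ
    have hev : ∀ᶠ α in 𝓝[>] (0:ℝ), ∀ p : I' × K,
        (Waug (Sum.inr p.1) + α • Δ.2 (Sum.inr p.1)) ⬝ᵥ x p.2 < 0 := by
      rw [Filter.eventually_all]
      intro p
      have heq : ∀ α : ℝ, (Waug (Sum.inr p.1) + α • Δ.2 (Sum.inr p.1)) ⬝ᵥ x p.2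
          = W' p.1 ⬝ᵥ x p.2 + α * (Δ.2 (Sum.inr p.1) ⬝ᵥ x p.2) := by
        intro α
        rw [hWaug]
        simp [add_dotProduct, smul_dotProduct, smul_eq_mul]
      have hc : Filter.Tendsto (fun α : ℝ => (Waug (Sum.inr p.1) + α • Δ.2 (Sum.inr p.1)) ⬝ᵥ x p.2)
          (𝓝[>] 0) (𝓝 (W' p.1 ⬝ᵥ x p.2)) := by
        simp only [heq]
        have h1 : Filter.Tendsto (fun α : ℝ => W' p.1 ⬝ᵥ x p.2 + α * (Δ.2 (Sum.inr p.1) ⬝ᵥ x p.2))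
            (𝓝 0) (𝓝 (W' p.1 ⬝ᵥ x p.2 + 0 * (Δ.2 (Sum.inr p.1) ⬝ᵥ x p.2))) :=
          Filter.Tendsto.const_add _ (Filter.tendsto_id.mul_const _)
        rw [zero_mul, add_zero] at h1
        exact h1.mono_left nhdsWithin_le_nhds
      exact hc.eventually_lt_const (hneg p.1 p.2)
    filter_upwards [hev] with α hα
    rw [hL'def, hLdef]
    congr 1
    refine Finset.sum_congr rfl fun k _ => Finset.sum_congr rfl fun j _ => ?_
    congr 2
    rw [Fintype.sum_sum_type]
    have hz : ∀ i' : I', ρ (((Haug, Waug) + α • Δ).2 (Sum.inr i') ⬝ᵥ x k) = 0 := by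
      intro i'
      exact hρneg _ (hα (i', k))
    simp only [Prod.fst_add, Prod.snd_add, Prod.smul_fst, Prod.smul_snd,
      Pi.add_apply, Pi.smul_apply] at hz ⊢
    have hzero : ∑ i' : I', (Haug j (Sum.inr i') + α • Δ.1 j (Sum.inr i')) *
        ρ ((Waug (Sum.inr i') + α • Δ.2 (Sum.inr i')) ⬝ᵥ x k) = 0 :=
      Finset.sum_eq_zero fun i' _ => by rw [hz i', mul_zero]
    rw [hzero, add_zero]
    refine Finset.sum_congr rfl fun i _ => ?_
    rw [hHaug, hWaug]
    simp
  refine ⟨hout, ?_, ?_⟩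
  · intro i' vh vw
    set Δ : (J → (I ⊕ I') → ℝ) × ((I ⊕ I') → Fin d → ℝ) :=
      ((fun j => Sum.elim (fun _ => (0:ℝ)) (fun i'' => if i'' = i' then vh j else 0)),
        Sum.elim (fun _ => (0 : Fin d → ℝ)) (fun i'' => if i'' = i' then vw else 0)) with hΔ
    have hres : ((fun j i => Δ.1 j (Sum.inl i)), fun i => Δ.2 (Sum.inl i))
        = ((0 : J → I → ℝ), (0 : I → Fin d → ℝ)) := by
      refine Prod.ext ?_ ?_
      · funext j i; simp [hΔ]
      · funext i m; simp [hΔ]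
    have hev := key Δ
    have hev2 : ∀ᶠ s in 𝓝[>] (0:ℝ),
        (L' ((Haug, Waug) + s • Δ) - L' (Haug, Waug)) / s = 0 := by
      filter_upwards [hev] with s hs
      rw [hs, hres, hLL]
      simp
    exact (Filter.tendsto_congr' hev2).mpr tendsto_const_nhds
  · intro Δ c hc
    apply hstat ((fun j i => Δ.1 j (Sum.inl i)), fun i => Δ.2 (Sum.inl i)) c
    have hev : ∀ᶠ α in 𝓝[>] (0:ℝ),
        (L' ((Haug, Waug) + α • Δ) - L' (Haug, Waug)) / α =
        (L ((H, W) + α • ((fun j i => Δ.1 j (Sum.inl i)), fun i => Δ.2 (Sum.inl i))) - L (H, W)) / α := by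
      filter_upwards [key Δ] with α hα
      rw [hα, hLL]
    exact hc.congr' hev
end
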